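/- arXiv:1610.04295 — 2 statements merged into one kernel-verified Lean document; each statement's English description precedes it below -/
import Mathlib

section
/- For every positive integer k, regarding the count as a real number, ρ_{k,1}(4) = 4^{k−1} + 2^{3k/2 − 1} · sin(kπ/4). -/
/-!
For an additive character `ψ` of `ℤ/4ℤ`, grouping the tuples by the value of `∑ xᵢ²` gives
`∑ₐ ρ_{k,a}(4) ψ(a) = (∑ₓ ψ(x²))ᵏ`. The squares mod 4 are `0, 1, 0, 1`, so for `ψ(a) = ζᵃ`
(`ζ⁴ = 1`) this reads `ρ₀ + ρ₁ζ + ρ₂ζ² + ρ₃ζ³ = (2 + 2ζ)ᵏ`. Taking `ζ = 1, -1` gives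
`ρ₁ + ρ₃ = 4ᵏ / 2`, and `ζ = i` gives `ρ₁ - ρ₃ = Im (2 + 2i)ᵏ = (2√2)ᵏ sin (kπ/4)`.
-/

/-- `rho k lam n` is the number of `k`-tuples `(x₁,…,x_k) ∈ (ℤ/nℤ)^k` with
`x₁² + ⋯ + x_k² ≡ lam (mod n)`. -/
noncomputable def rho (k : ℕ) (lam : ℤ) (n : ℕ) : ℕ :=
  Nat.card {x : Fin k → ZMod n // ∑ i, x i ^ 2 = (lam : ZMod n)}

open Finset Complex

theorem AddChar.map_sum_eq_prod {ι A M : Type*} [AddCommMonoid A] [CommMonoid M]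
    (ψ : AddChar A M) (s : Finset ι) (f : ι → A) :
    ψ (∑ i ∈ s, f i) = ∏ i ∈ s, ψ (f i) := by
  classical
  induction s using Finset.induction_on with
  | empty => simp
  | insert i s hi ih => rw [sum_insert hi, prod_insert hi, AddChar.map_add_eq_mul, ih]

theorem sum_card_smul_addChar_eq_pow {G α R : Type*} [AddCommMonoid G] [Fintype G]
    [DecidableEq G] [Fintype α] [CommSemiring R] (ψ : AddChar G R) (f : α → G) (k : ℕ) :
    ∑ a, Fintype.card {x : Fin k → α // ∑ i, f (x i) = a} • ψ a = (∑ b, ψ (f b)) ^ k :=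
  calc ∑ a, Fintype.card {x : Fin k → α // ∑ i, f (x i) = a} • ψ a
      = ∑ x : Fin k → α, ψ (∑ i, f (x i)) := by
        simp only [← Fintype.sum_fiberwise' (fun x : Fin k → α => ∑ i, f (x i)) ψ, sum_const,
          card_univ]
    _ = ∑ x : Fin k → α, ∏ i, ψ (f (x i)) := by simp only [AddChar.map_sum_eq_prod]
    _ = (∑ b, ψ (f b)) ^ k := (Fintype.sum_pow (fun b => ψ (f b)) k).symm

theorem rho_eq_fintype_card (k : ℕ) (lam : ℤ) (n : ℕ) [NeZero n] :
    rho k lam n = Fintype.card {x : Fin k → ZMod n // ∑ i, x i ^ 2 = (lam : ZMod n)} :=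
  Nat.card_eq_fintype_card

theorem ZMod.sum_univ_four {M : Type*} [AddCommMonoid M] (f : ZMod 4 → M) :
    ∑ a, f a = f 0 + f 1 + f 2 + f 3 :=
  Fin.sum_univ_four f

theorem sum_rho_four_mul_pow {R : Type*} [CommSemiring R] {ζ : R} (hζ : ζ ^ 4 = 1) (k : ℕ) :
    (rho k 0 4 + rho k 1 4 * ζ + rho k 2 4 * ζ ^ 2 + rho k 3 4 * ζ ^ 3 : R) =
      (2 + 2 * ζ) ^ k := by
  have h := sum_card_smul_addChar_eq_pow (AddChar.zmodChar 4 hζ) (· ^ 2) k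
  simp only [ZMod.sum_univ_four, AddChar.zmodChar_apply, nsmul_eq_mul] at h
  reduce_mod_char at h
  simp only [ZMod.val_zero, ZMod.val_one'' (by norm_num : 4 ≠ 1), ZMod.val_ofNat, Nat.reduceMod,
    pow_zero, pow_one, mul_one] at h
  simp only [rho_eq_fintype_card, Int.cast_zero, Int.cast_one, Int.cast_ofNat]
  rw [h]
  ring

theorem rho_one_four_eq_add_im {k : ℕ} (hk : k ≠ 0) :
    (rho k 1 4 : ℝ) = 4 ^ (k - 1) + ((2 + 2 * I) ^ k).im / 2 := by
  have hsum := sum_rho_four_mul_pow (one_pow 4 : (1 : ℝ) ^ 4 = 1) k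
  have halt := sum_rho_four_mul_pow (by norm_num : (-1 : ℝ) ^ 4 = 1) k
  have hI := congrArg Complex.im (sum_rho_four_mul_pow I_pow_four k)
  norm_num [zero_pow hk] at hsum halt hI
  obtain ⟨j, rfl⟩ := Nat.exists_eq_add_one_of_ne_zero hk
  rw [pow_succ] at hsum
  rw [Nat.add_sub_cancel]
  linarith

theorem im_two_add_two_mul_I_pow (k : ℕ) :
    ((2 + 2 * I) ^ k).im = (2 * √2) ^ k * Real.sin (k * Real.pi / 4) := by
  have hpolar : 2 + 2 * I = ((2 * √2 : ℝ) : ℂ) * exp ((Real.pi / 4 : ℝ) * I) := by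
    have hsqrt : √2 * √2 = 2 := Real.mul_self_sqrt zero_le_two
    apply Complex.ext
    · rw [re_ofReal_mul, exp_ofReal_mul_I_re, Real.cos_pi_div_four]
      simp only [add_re, mul_re, re_ofNat, im_ofNat, I_re, I_im]
      linarith
    · rw [im_ofReal_mul, exp_ofReal_mul_I_im, Real.sin_pi_div_four]
      simp only [add_im, mul_im, re_ofNat, im_ofNat, I_re, I_im]
      linarith
  rw [hpolar, mul_pow, ← exp_nat_mul, ← ofReal_pow,
    show (k : ℂ) * ((Real.pi / 4 : ℝ) * I) = ((k * Real.pi / 4 : ℝ) : ℂ) * I by push_cast; ring,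
    im_ofReal_mul, exp_ofReal_mul_I_im]

theorem two_rpow_three_mul_div_two_sub_one (k : ℕ) :
    (2 : ℝ) ^ (3 * (k : ℝ) / 2 - 1) = (2 * √2) ^ k / 2 := by
  have h : 2 * √2 = (2 : ℝ) ^ (3 / 2 : ℝ) := by
    rw [show (3 / 2 : ℝ) = 1 + 1 / 2 by norm_num, Real.rpow_add two_pos, Real.rpow_one,
      Real.sqrt_eq_rpow]
  rw [Real.rpow_sub_one two_ne_zero, h, ← Real.rpow_natCast, ← Real.rpow_mul zero_le_two]
  ring_nf

/-- `ρ_{k,1}(4) = 4^{k−1} + 2^{3k/2 − 1} · sin(kπ/4)`. -/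
theorem rho_one_four (k : ℕ) (hk : 0 < k) :
    (rho k 1 4 : ℝ) =
      4 ^ (k - 1) + 2 ^ (3 * (k : ℝ) / 2 - 1) * Real.sin (k * Real.pi / 4) := by
  rw [rho_one_four_eq_add_im hk.ne', im_two_add_two_mul_I_pow, two_rpow_three_mul_div_two_sub_one]
  ring
end

section
/- Let p be an odd prime, k a positive integer, and s ≥ 1 an integer. Then ρ_{k,0}(p^s) = Σ_{i=0}^{⌊(s−1)/2⌋} p^{ki + (s−2i−1)(k−1)} · ρ^(1)_{k,0}(p) + p^{⌊s/2⌋·k}. -/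
/-- `rho1 k lam p s` is the number of `k`-tuples `(x₁,…,x_k) ∈ (ℤ/p^sℤ)^k` with
`x₁² + ⋯ + x_k² ≡ lam (mod p^s)` such that `p ∤ xᵢ` for at least one index `i`. -/
noncomputable def rho1 (k : ℕ) (lam : ℤ) (p s : ℕ) : ℕ :=
  Nat.card {x : Fin k → ZMod (p ^ s) //
    (∑ i, x i ^ 2 = (lam : ZMod (p ^ s))) ∧ ∃ i, ¬ (p : ZMod (p ^ s)) ∣ x i}

/-!
Split the solutions of `x₁² + ⋯ + x_k² ≡ 0 (mod p^s)` into primitive ones (some `xᵢ` prime to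
`p`) and imprimitive ones. For `m ≥ 1` a primitive solution `z` mod `p^m` lifts to `z + p^m t`
mod `p^(m+1)` exactly when `t` solves a linear equation mod `p` whose coefficient `2 z_j` is
nonzero (this is where `p` odd is used), so it has `p^(k-1)` lifts and
`ρ^(1)(p^s) = p^((s-1)(k-1)) ρ^(1)(p)`. An imprimitive solution mod `p^(s+2)` is `p y` with
`y` mod `p^(s+1)` and `Σ y² ≡ 0 (mod p^s)`, so there are `p^k ρ(p^s)` of them, while mod `p`
only `0` is imprimitive. The recursion
`ρ(p^(s+2)) = p^((s+1)(k-1)) ρ^(1)(p) + p^k ρ(p^s)` unrolls to the closed form.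
-/

open Finset

theorem Nat.card_subtype_prod_eq_mul {α β : Type*} [Finite α] [Finite β]
    (P : α → Prop) (R : α → β → Prop) (c : ℕ) (hRP : ∀ a b, R a b → P a)
    (hc : ∀ a, P a → Nat.card {b // R a b} = c) :
    Nat.card {q : α × β // R q.1 q.2} = Nat.card {a // P a} * c := by
  classical
  have := Fintype.ofFinite α
  let e : {q : α × β // R q.1 q.2} ≃ Σ a : {a // P a}, {b // R a b} :=
    { toFun := fun q => ⟨⟨q.1.1, hRP _ _ q.2⟩, q.1.2, q.2⟩
      invFun := fun s => ⟨(s.1.1, s.2.1), s.2.2⟩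
      left_inv := fun _ => rfl
      right_inv := fun _ => rfl }
  rw [Nat.card_congr e, Nat.card_sigma, sum_congr rfl fun a _ => hc a.1 a.2, sum_const,
    Finset.card_univ, smul_eq_mul, Nat.card_eq_fintype_card]

theorem card_sum_mul_eq {F ι : Type*} [Field F] [Fintype F] [Fintype ι] [DecidableEq ι]
    (a : ι → F) {j : ι} (hj : a j ≠ 0) (b : F) :
    Nat.card {t : ι → F // ∑ i, a i * t i = b} = Fintype.card F ^ (Fintype.card ι - 1) := by
  let e := (Equiv.funSplitAt j F).trans (Equiv.prodComm _ _)
  have hsplit (t : ι → F) :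
      ∑ i, a i * t i = a j * (e t).2 + ∑ i : {i // i ≠ j}, a i * (e t).1 i :=
    Fintype.sum_eq_add_sum_subtype_ne _ j
  rw [← Nat.card_congr (e.symm.subtypeEquiv fun q => by rw [hsplit, e.apply_symm_apply]),
    Nat.card_subtype_prod_eq_mul (fun _ => True)
      (fun (s : {i // i ≠ j} → F) (x : F) => a j * x + ∑ i : {i // i ≠ j}, a i * s i = b)
      1 (fun _ _ _ => trivial) fun s _ => ?_]
  · rw [Nat.card_subtype_true, Nat.card_fun, Nat.card_eq_fintype_card, Nat.card_eq_fintype_card,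
      Fintype.card_subtype_compl, Fintype.card_subtype_eq, mul_one]
  · refine Nat.card_eq_one_iff_exists.2 ⟨⟨(b - ∑ i : {i // i ≠ j}, a i * s i) / a j, ?_⟩, ?_⟩
    · field_simp
      ring
    · rintro ⟨x, hx⟩
      ext
      field_simp
      linear_combination hx

namespace ZMod

theorem natCast_dvd_iff_castHom_eq_zero {d n : ℕ} [NeZero n] (h : d ∣ n) (x : ZMod n) :
    (d : ZMod n) ∣ x ↔ castHom h (ZMod d) x = 0 := by
  constructor
  · rintro ⟨c, rfl⟩
    rw [map_mul, map_natCast, natCast_self, zero_mul]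
  · intro hx
    rw [castHom_apply, cast_eq_val, natCast_eq_zero_iff] at hx
    obtain ⟨c, hc⟩ := hx
    exact ⟨c, by rw [← natCast_zmod_val x, hc, Nat.cast_mul]⟩

theorem natCast_dvd_castHom_iff {d a n : ℕ} [NeZero a] [NeZero n] (hd : d ∣ a) (ha : a ∣ n)
    (x : ZMod n) : (d : ZMod a) ∣ castHom ha (ZMod a) x ↔ (d : ZMod n) ∣ x := by
  rw [natCast_dvd_iff_castHom_eq_zero hd, natCast_dvd_iff_castHom_eq_zero (hd.trans ha),
    ← RingHom.comp_apply, castHom_comp]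

theorem natCast_mul_eq_zero_iff {a b n : ℕ} [NeZero n] (h : a * b = n) (x : ZMod n) :
    (a : ZMod n) * x = 0 ↔ castHom (Dvd.intro_left a h) (ZMod b) x = 0 := by
  have ha : 0 < a := Nat.pos_of_ne_zero (left_ne_zero_of_mul (h ▸ NeZero.ne n))
  rw [← natCast_zmod_val x, ← Nat.cast_mul, natCast_eq_zero_iff, map_natCast,
    natCast_eq_zero_iff, show n ∣ a * x.val ↔ a * b ∣ a * x.val by rw [h],
    Nat.mul_dvd_mul_iff_left ha]

theorem castHom_cast {a b n : ℕ} [NeZero b] (ha : a ∣ n) (hb : a ∣ b) (y : ZMod b) :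
    castHom ha (ZMod a) (cast y : ZMod n) = castHom hb (ZMod a) y := by
  rw [cast_eq_val, map_natCast, castHom_apply, cast_eq_val]

theorem castHom_cast_add_mul_cast {a b n : ℕ} [NeZero a] (h : a * b = n) (z : ZMod a)
    (t : ZMod b) : castHom (Dvd.intro b h) (ZMod a) (cast z + a * cast t : ZMod n) = z := by
  rw [map_add, map_mul, map_natCast, natCast_self, zero_mul, add_zero, castHom_cast _ dvd_rfl,
    castHom_self, RingHom.id_apply]

noncomputable def digitsEquiv {a b n : ℕ} [NeZero a] [NeZero b] (h : a * b = n) :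
    ZMod a × ZMod b ≃ ZMod n :=
  haveI : NeZero n := ⟨h ▸ mul_ne_zero (NeZero.ne a) (NeZero.ne b)⟩
  Equiv.ofBijective (fun q => cast q.1 + a * cast q.2) <| by
    refine (Fintype.bijective_iff_injective_and_card _).2 ⟨?_, by simp [ZMod.card, h]⟩
    rintro ⟨z, t⟩ ⟨z', t'⟩ hzt
    obtain rfl : z = z' := by
      simpa only [castHom_cast_add_mul_cast h] using
        congrArg (castHom (Dvd.intro b h) (ZMod a)) hzt
    have ht : (a : ZMod n) * (cast t - cast t') = 0 := by
      rw [mul_sub, sub_eq_zero]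
      exact add_left_cancel hzt
    rw [natCast_mul_eq_zero_iff h, map_sub, castHom_cast _ dvd_rfl, castHom_cast _ dvd_rfl,
      castHom_self, RingHom.id_apply, RingHom.id_apply, sub_eq_zero] at ht
    rw [ht]

section digits

variable {a b n : ℕ} [NeZero a] [NeZero b] (h : a * b = n)

theorem digitsEquiv_apply (q : ZMod a × ZMod b) :
    digitsEquiv h q = (cast q.1 + a * cast q.2 : ZMod n) := rfl

theorem castHom_digitsEquiv (q : ZMod a × ZMod b) :
    castHom (Dvd.intro b h) (ZMod a) (digitsEquiv h q) = q.1 :=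
  castHom_cast_add_mul_cast h q.1 q.2

theorem card_subtype_eq_card_mul_of_card_lifts {ι : Type*} [Fintype ι]
    (R : (ι → ZMod n) → Prop) (P : (ι → ZMod a) → Prop) (c : ℕ)
    (hRP : ∀ x, R x → P fun i => castHom (Dvd.intro b h) (ZMod a) (x i))
    (hc : ∀ z, P z → Nat.card {t : ι → ZMod b // R fun i => digitsEquiv h (z i, t i)} = c) :
    Nat.card {x // R x} = Nat.card {z // P z} * c := by
  let e := (Equiv.arrowProdEquivProdArrow ι _ _).symm.trans
    (Equiv.piCongrRight fun _ => digitsEquiv h)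
  rw [← Nat.card_congr (e.subtypeEquiv fun _ => Iff.rfl)]
  refine Nat.card_subtype_prod_eq_mul P
    (fun (z : ι → ZMod a) (t : ι → ZMod b) => R fun i => digitsEquiv h (z i, t i)) c
    (fun z t hzt => ?_) hc
  simpa only [castHom_digitsEquiv h] using hRP _ hzt

theorem card_subtype_castHom_comp {ι : Type*} [Fintype ι] (P : (ι → ZMod a) → Prop) :
    Nat.card {x : ι → ZMod n // P fun i => castHom (Dvd.intro b h) (ZMod a) (x i)} =
      Nat.card {z // P z} * b ^ Fintype.card ι := by
  refine card_subtype_eq_card_mul_of_card_lifts h _ P _ (fun _ hx => hx) fun z hz => ?_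
  simp only [castHom_digitsEquiv h]
  rw [Nat.card_congr (Equiv.subtypeUnivEquiv fun _ => hz), Nat.card_fun, Nat.card_zmod,
    Nat.card_eq_fintype_card]

theorem exists_sum_sq_digitsEquiv_eq_zero_iff (hba : b ∣ a) {ι : Type*} [Fintype ι]
    {z : ι → ZMod a} (hz : ∑ i, z i ^ 2 = 0) :
    ∃ w : ZMod b, ∀ t : ι → ZMod b,
      ∑ i, digitsEquiv h (z i, t i) ^ 2 = 0 ↔
        ∑ i, 2 * castHom hba (ZMod b) (z i) * t i = w := by
  have : NeZero n := ⟨h ▸ mul_ne_zero (NeZero.ne a) (NeZero.ne b)⟩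
  have ha_sq : (a : ZMod n) ^ 2 = 0 := by
    rw [← Nat.cast_pow, natCast_eq_zero_iff, ← h, sq]
    exact mul_dvd_mul_left a hba
  obtain ⟨w, hw⟩ : (a : ZMod n) ∣ ∑ i, (cast (z i) : ZMod n) ^ 2 := by
    rw [natCast_dvd_iff_castHom_eq_zero (Dvd.intro b h), map_sum]
    simpa only [map_pow, castHom_cast _ dvd_rfl, castHom_self, RingHom.id_apply] using hz
  refine ⟨-castHom (Dvd.intro_left a h) (ZMod b) w, fun t => ?_⟩
  have hexpand : ∑ i, digitsEquiv h (z i, t i) ^ 2 =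
      a * (w + ∑ i, 2 * cast (z i) * cast (t i)) :=
    calc ∑ i, digitsEquiv h (z i, t i) ^ 2
        = ∑ i, ((cast (z i) : ZMod n) ^ 2 + a * (2 * cast (z i) * cast (t i))) := by
          refine sum_congr rfl fun i _ => ?_
          rw [digitsEquiv_apply]
          linear_combination (cast (t i) : ZMod n) ^ 2 * ha_sq
      _ = a * (w + ∑ i, 2 * cast (z i) * cast (t i)) := by
          rw [sum_add_distrib, ← mul_sum, hw, mul_add]
  rw [hexpand, natCast_mul_eq_zero_iff h, map_add, map_sum, add_comm, ← eq_neg_iff_add_eq_zero]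
  simp only [map_mul, map_ofNat, castHom_cast _ hba, castHom_cast _ dvd_rfl, castHom_self,
    RingHom.id_apply]

end digits

end ZMod

noncomputable def rhoImprimitive (k p e : ℕ) : ℕ :=
  Nat.card {x : Fin k → ZMod (p ^ e) // ∑ i, x i ^ 2 = 0 ∧ ∀ i, (p : ZMod (p ^ e)) ∣ x i}

theorem rho_pow_eq_rho1_add_rhoImprimitive (k p e : ℕ) [NeZero p] :
    rho k 0 (p ^ e) = rho1 k 0 p e + rhoImprimitive k p e := by
  rw [rho, rho1, rhoImprimitive, Int.cast_zero, ← Nat.card_sum]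
  let S : (Fin k → ZMod (p ^ e)) → Prop := fun x => ∑ i, x i ^ 2 = 0
  let Prim : (Fin k → ZMod (p ^ e)) → Prop := fun x => ∃ i, ¬ (p : ZMod (p ^ e)) ∣ x i
  refine Nat.card_congr ((Equiv.sumCompl fun x : Subtype S => Prim x).symm.trans
    (Equiv.sumCongr (Equiv.subtypeSubtypeEquivSubtypeInter S Prim)
      ((Equiv.subtypeSubtypeEquivSubtypeInter S (¬ Prim ·)).trans
        (Equiv.subtypeEquivRight fun x => ?_))))
  simp only [S, Prim, not_exists, not_not]

theorem rho_one (k : ℕ) : rho k 0 1 = 1 := by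
  rw [rho, Nat.card_eq_one_iff_exists]
  exact ⟨⟨0, Subsingleton.elim _ _⟩, fun _ => Subsingleton.elim _ _⟩

theorem rhoImprimitive_one (k p : ℕ) : rhoImprimitive k p 1 = 1 := by
  have hp : (p : ZMod (p ^ 1)) = 0 := by
    rw [← ZMod.natCast_self (p ^ 1), pow_one]
  rw [rhoImprimitive, Nat.card_eq_one_iff_exists]
  refine ⟨⟨0, by simp⟩, fun ⟨x, _, hx⟩ => ?_⟩
  ext i
  simpa [hp] using hx i

theorem rhoImprimitive_add_two (k p s : ℕ) [NeZero p] :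
    rhoImprimitive k p (s + 2) = rho k 0 (p ^ s) * p ^ k := by
  have h₁ : p * p ^ (s + 1) = p ^ (s + 2) := (pow_succ' p (s + 1)).symm
  have h₂ : p ^ 2 * p ^ s = p ^ (s + 2) := by ring
  have h₃ : p ^ s * p = p ^ (s + 1) := (pow_succ p s).symm
  let red := ZMod.castHom (Dvd.intro p h₃) (ZMod (p ^ s))
  have hlift (y : Fin k → ZMod (p ^ (s + 1))) :
      (∑ i, ZMod.digitsEquiv h₁ (0, y i) ^ 2 = 0 ∧
        ∀ i, (p : ZMod (p ^ (s + 2))) ∣ ZMod.digitsEquiv h₁ (0, y i)) ↔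
      ∑ i, red (y i) ^ 2 = 0 := by
    simp only [ZMod.digitsEquiv_apply, ZMod.cast_zero, zero_add, dvd_mul_right, implies_true,
      and_true, mul_pow, ← mul_sum]
    rw [← Nat.cast_pow, ZMod.natCast_mul_eq_zero_iff h₂, map_sum]
    simp only [red, map_pow, ZMod.castHom_cast _ (Dvd.intro p h₃)]
  rw [rhoImprimitive, ZMod.card_subtype_eq_card_mul_of_card_lifts h₁ _ (fun u => u = 0)
      (Nat.card {y : Fin k → ZMod (p ^ (s + 1)) // ∑ i, red (y i) ^ 2 = 0})
      (fun x hx => funext fun i => (ZMod.natCast_dvd_iff_castHom_eq_zero _ _).1 (hx.2 i))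
      fun z hz => hz ▸ Nat.card_congr (Equiv.subtypeEquivRight hlift),
    ZMod.card_subtype_castHom_comp h₃ fun z => ∑ i, z i ^ 2 = 0, Nat.card_unique, one_mul, rho,
    Int.cast_zero, Fintype.card_fin]

theorem rho1_succ {p : ℕ} (hp : p.Prime) (hodd : Odd p) (k : ℕ) {m : ℕ} (hm : m ≠ 0) :
    rho1 k 0 p (m + 1) = rho1 k 0 p m * p ^ (k - 1) := by
  have : Fact p.Prime := ⟨hp⟩
  have h : p ^ m * p = p ^ (m + 1) := (pow_succ p m).symm
  have hpm : p ∣ p ^ m := dvd_pow_self p hm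
  have htwo : (2 : ZMod p) ≠ 0 := by
    refine Ring.two_ne_zero ?_
    rw [ZMod.ringChar_zmod_n]
    rintro rfl
    exact Nat.not_odd_iff_even.2 even_two hodd
  rw [rho1, rho1, Int.cast_zero, Int.cast_zero]
  refine ZMod.card_subtype_eq_card_mul_of_card_lifts h _ _ _
    (fun x ⟨hx, i, hi⟩ => ⟨?_, i, ?_⟩) fun z ⟨hz, j, hj⟩ => ?_
  · simpa only [map_sum, map_pow, map_zero] using
      congrArg (ZMod.castHom (Dvd.intro p h) (ZMod (p ^ m))) hx
  · rwa [ZMod.natCast_dvd_castHom_iff hpm]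
  obtain ⟨w, hw⟩ := ZMod.exists_sum_sq_digitsEquiv_eq_zero_iff h hpm hz
  have hprim (t : Fin k → ZMod p) :
      ∃ i, ¬ (p : ZMod (p ^ (m + 1))) ∣ ZMod.digitsEquiv h (z i, t i) :=
    ⟨j, by rwa [← ZMod.natCast_dvd_castHom_iff hpm (Dvd.intro p h), ZMod.castHom_digitsEquiv]⟩
  have hcoeff : 2 * ZMod.castHom hpm (ZMod p) (z j) ≠ 0 :=
    mul_ne_zero htwo fun h0 => hj ((ZMod.natCast_dvd_iff_castHom_eq_zero hpm _).2 h0)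
  refine (Nat.card_congr (Equiv.subtypeEquivRight fun t => ?_)).trans
    ((card_sum_mul_eq (fun i => 2 * ZMod.castHom hpm (ZMod p) (z i)) hcoeff w).trans
      (by rw [ZMod.card, Fintype.card_fin]))
  rw [hw t, and_iff_left (hprim t)]

theorem rho1_pow {p : ℕ} (hp : p.Prime) (hodd : Odd p) (k : ℕ) {s : ℕ} (hs : 1 ≤ s) :
    rho1 k 0 p s = p ^ ((s - 1) * (k - 1)) * rho1 k 0 p 1 := by
  induction s, hs using Nat.le_induction with
  | base => simp
  | succ m hm ih =>
    rw [rho1_succ hp hodd k (by omega), ih, show m + 1 - 1 = m - 1 + 1 by omega, add_mul,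
      one_mul, pow_add]
    ring

theorem rho_pow_add_two {p : ℕ} (hp : p.Prime) (hodd : Odd p) (k s : ℕ) :
    rho k 0 (p ^ (s + 2)) =
      p ^ ((s + 1) * (k - 1)) * rho1 k 0 p 1 + p ^ k * rho k 0 (p ^ s) := by
  have : NeZero p := ⟨hp.ne_zero⟩
  rw [rho_pow_eq_rho1_add_rhoImprimitive, rhoImprimitive_add_two,
    rho1_pow hp hodd k (by omega), mul_comm (rho k 0 (p ^ s)), show s + 2 - 1 = s + 1 from rfl]

theorem eq_sum_of_two_step_rec {u : ℕ → ℕ} {q k l A : ℕ} (h₀ : u 0 = 1) (h₁ : u 1 = A + 1)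
    (hrec : ∀ s, u (s + 2) = q ^ ((s + 1) * l) * A + q ^ k * u s) {s : ℕ} (hs : 1 ≤ s) :
    u s = ∑ i ∈ range ((s - 1) / 2 + 1), q ^ (k * i + (s - 2 * i - 1) * l) * A +
      q ^ (s / 2 * k) := by
  induction s using Nat.strong_induction_on with
  | _ s ih =>
    match s, hs with
    | 1, _ => simp [h₁]
    | 2, _ => simp [hrec, h₀]
    | s + 3, _ =>
      have hterm (i : ℕ) : q ^ (k * (i + 1) + (s + 3 - 2 * (i + 1) - 1) * l) * A =
          q ^ k * (q ^ (k * i + (s + 1 - 2 * i - 1) * l) * A) := by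
        rw [show s + 3 - 2 * (i + 1) - 1 = s + 1 - 2 * i - 1 by omega]
        ring
      rw [hrec, ih (s + 1) (by omega) (by omega),
        show (s + 3 - 1) / 2 + 1 = (s + 1 - 1) / 2 + 1 + 1 by omega,
        sum_range_succ' _ ((s + 1 - 1) / 2 + 1), show (s + 3) / 2 = (s + 1) / 2 + 1 by omega]
      simp only [hterm, ← mul_sum, mul_zero, zero_add, Nat.sub_zero,
        show s + 3 - 1 = s + 1 + 1 from rfl]
      ring

theorem rho_odd_prime_pow_zero_general (p : ℕ) (hp : p.Prime) (hodd : Odd p) (k : ℕ)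
    (s : ℕ) (hs : 1 ≤ s) :
    rho k 0 (p ^ s) =
      ∑ i ∈ Finset.range ((s - 1) / 2 + 1),
        p ^ (k * i + (s - 2 * i - 1) * (k - 1)) * rho1 k 0 p 1
      + p ^ (s / 2 * k) := by
  have : NeZero p := ⟨hp.ne_zero⟩
  refine eq_sum_of_two_step_rec (u := fun s => rho k 0 (p ^ s)) ?_ ?_
    (rho_pow_add_two hp hodd k) hs
  · rw [pow_zero, rho_one]
  · rw [rho_pow_eq_rho1_add_rhoImprimitive, rhoImprimitive_one]

/-- For an odd prime `p`,
`ρ_{k,0}(p^s) = Σ_{i=0}^{⌊(s−1)/2⌋} p^{ki+(s−2i−1)(k−1)} · ρ^{(1)}_{k,0}(p) + p^{⌊s/2⌋k}`. -/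
theorem rho_odd_prime_pow_zero (p : ℕ) (hp : p.Prime) (hodd : Odd p) (k : ℕ) (hk : 0 < k)
    (s : ℕ) (hs : 1 ≤ s) :
    rho k 0 (p ^ s) =
      ∑ i ∈ Finset.range ((s - 1) / 2 + 1),
        p ^ (k * i + (s - 2 * i - 1) * (k - 1)) * rho1 k 0 p 1
      + p ^ (s / 2 * k) :=
  rho_odd_prime_pow_zero_general p hp hodd k s hs
end
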